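/- Let k ≥ 1 and let ℓ = ik + j(k+1) for some 0 ≤ i ≤ k, 0 ≤ j ≤ k−1. Then the number of nonnegative integers r such that (r, ℓ) is a square vector of the word w_k = (0^k 1^k)^{3k} (0^{k+1} 1^{k+1})^k is at least (k+1)/2. -/

import Mathlib

/-- `m`-fold repetition of the word `u`. -/
def repWord {α : Type*} (u : List α) (m : ℕ) : List α :=
  (List.replicate m u).flatten

/-- The word `w_k = (0^k 1^k)^{3k} (0^{k+1} 1^{k+1})^k` over the binary alphabet. -/
def wWord (k : ℕ) : List (Fin 2) :=
  repWord (List.replicate k 0 ++ List.replicate k 1) (3 * k) ++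
    repWord (List.replicate (k + 1) 0 ++ List.replicate (k + 1) 1) k

/-- `(r, ℓ)` is a square vector of a binary word `w` if `w` has a fragment `u ++ v` with
`|u| = |v|` such that each of `u` and `v` contains exactly `r` zeros and exactly `ℓ` ones. -/
def SquareVector (w : List (Fin 2)) (r ℓ : ℕ) : Prop :=
  ∃ x u v y : List (Fin 2), w = x ++ u ++ v ++ y ∧ u.length = v.length ∧
    u.count 0 = r ∧ u.count 1 = ℓ ∧ v.count 0 = r ∧ v.count 1 = ℓ

/-!
Start the square inside the block `0^k 1^k` with index `2(k-i) + (k-j-1)` (counting from `0`),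
right after its `(k-j)`-th one, and give each half length `2(i+j)k + j + e`. The midpoint then
falls in the zero run of block `3k - i` of the whole word, and the end in the zero run of block
`j` of `(0^{k+1} 1^{k+1})^k`, so counting ones up to these three positions shows that each half
has `ik + j(k+1)` ones and `(i+j)k + e` zeros. The constraints on the end position allow every
`e` with `⌈j/2⌉ ≤ e ≤ ⌈j/2⌉ + ⌊k/2⌋`, i.e. `⌊k/2⌋ + 1 ≥ (k+1)/2` values of `r`.
-/

section RepWord

variable {α : Type*}

@[simp]
lemma length_repWord (u : List α) (m : ℕ) : (repWord u m).length = m * u.length := by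
  simp [repWord]

@[simp]
lemma count_repWord [BEq α] (a : α) (u : List α) (m : ℕ) :
    (repWord u m).count a = m * u.count a := by
  simp [repWord, List.count_flatten]

lemma repWord_add (u : List α) (m n : ℕ) : repWord u (m + n) = repWord u m ++ repWord u n := by
  simp only [repWord, List.replicate_add, List.flatten_append]

lemma take_repWord_append (u rest : List α) {m q s : ℕ} (hq : q < m) (hs : s ≤ u.length) :
    (repWord u m ++ rest).take (q * u.length + s) = repWord u q ++ u.take s := by
  obtain ⟨n, rfl⟩ : ∃ n, m = q + (1 + n) := ⟨m - q - 1, by omega⟩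
  have hsplit : repWord u (q + (1 + n)) ++ rest = repWord u q ++ (u ++ (repWord u n ++ rest)) := by
    rw [repWord_add, repWord_add]
    simp [repWord]
  rw [hsplit, ← length_repWord, List.take_length_add_append, List.take_append_of_le_length hs]

end RepWord

lemma count_zero_add_count_one (l : List (Fin 2)) : l.count 0 + l.count 1 = l.length := by
  induction l with
  | nil => rfl
  | cons a l ih => fin_cases a <;> simp <;> omega

def prefixOnes (w : List (Fin 2)) (n : ℕ) : ℕ := (w.take n).count 1

lemma prefixOnes_append_length (x y : List (Fin 2)) (n : ℕ) :
    prefixOnes (x ++ y) (x.length + n) = x.count 1 + prefixOnes y n := by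
  simp only [prefixOnes, List.take_length_add_append, List.count_append]

lemma squareVector_of_prefixOnes {w : List (Fin 2)} {p L r ℓ : ℕ} (hlen : p + L + L ≤ w.length)
    (h₁ : prefixOnes w (p + L) = prefixOnes w p + ℓ)
    (h₂ : prefixOnes w (p + L + L) = prefixOnes w (p + L) + ℓ) (hL : L = r + ℓ) :
    SquareVector w r ℓ := by
  set u := (w.drop p).take L
  set v := (w.drop (p + L)).take L
  have hu : w.take (p + L) = w.take p ++ u := List.take_add
  have hv : w.take (p + L + L) = w.take (p + L) ++ v := List.take_add
  have hu_len : u.length = L := by simp [u]; omega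
  have hv_len : v.length = L := by simp [v]; omega
  have hu_ones : u.count 1 = ℓ := by
    simp only [prefixOnes, hu, List.count_append] at h₁; omega
  have hv_ones : v.count 1 = ℓ := by
    simp only [prefixOnes, hv, List.count_append] at h₂; omega
  have hu_zeros := count_zero_add_count_one u
  have hv_zeros := count_zero_add_count_one v
  refine ⟨w.take p, u, v, w.drop (p + L + L), ?_, by omega, by omega, hu_ones, by omega, hv_ones⟩
  rw [← hu, ← hv, List.take_append_drop]

lemma finite_setOf_squareVector (w : List (Fin 2)) (ℓ : ℕ) :
    {r : ℕ | SquareVector w r ℓ}.Finite := by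
  refine (Set.finite_Iic w.length).subset ?_
  rintro r ⟨x, u, v, y, rfl, -, rfl, -, -, -⟩
  simp only [Set.mem_Iic, List.length_append]
  have := List.count_le_length (a := (0 : Fin 2)) (l := u)
  omega

def block (a : ℕ) : List (Fin 2) := List.replicate a 0 ++ List.replicate a 1

@[simp]
lemma length_block (a : ℕ) : (block a).length = 2 * a := by simp [block]; ring

@[simp]
lemma count_one_block (a : ℕ) : (block a).count 1 = a := by simp [block, List.count_replicate]

lemma count_one_take_block {a s : ℕ} (hs : s ≤ 2 * a) : ((block a).take s).count 1 = s - a := by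
  rcases le_total s a with h | h
  · simp [block, List.take_append, List.take_replicate, List.count_replicate, h]
  · simp [block, List.take_append, List.take_replicate, List.count_replicate, h]
    omega

lemma prefixOnes_repWord_block_append (rest : List (Fin 2)) {a m q s : ℕ} (hq : q < m)
    (hs : s ≤ 2 * a) :
    prefixOnes (repWord (block a) m ++ rest) (q * (2 * a) + s) = q * a + (s - a) := by
  rw [prefixOnes, ← length_block, take_repWord_append _ _ hq (by simpa using hs),
    List.count_append, count_repWord, count_one_block, count_one_take_block hs]

lemma wWord_eq_block (k : ℕ) : wWord k = repWord (block k) (3 * k) ++ repWord (block (k + 1)) k :=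
  rfl

lemma length_wWord (k : ℕ) : (wWord k).length = 3 * k * (2 * k) + k * (2 * (k + 1)) := by
  simp [wWord_eq_block]

lemma prefixOnes_wWord_left {k q s : ℕ} (hq : q < 3 * k) (hs : s ≤ 2 * k) :
    prefixOnes (wWord k) (q * (2 * k) + s) = q * k + (s - k) := by
  rw [wWord_eq_block, prefixOnes_repWord_block_append _ hq hs]

lemma prefixOnes_wWord_right {k Q S : ℕ} (hQ : Q < k) (hS : S ≤ 2 * (k + 1)) :
    prefixOnes (wWord k) (3 * k * (2 * k) + (Q * (2 * (k + 1)) + S)) =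
      3 * k * k + (Q * (k + 1) + (S - (k + 1))) := by
  rw [wWord_eq_block, ← List.append_nil (repWord (block (k + 1)) k), ← length_block,
    ← length_repWord, prefixOnes_append_length,
    prefixOnes_repWord_block_append _ hQ hS, count_repWord, count_one_block]

lemma prefixOnes_wWord_zeroRun {k q s : ℕ} (hk : 0 < k) (hq : q ≤ 3 * k) (hs : s ≤ k) :
    prefixOnes (wWord k) (q * (2 * k) + s) = q * k := by
  rcases hq.lt_or_eq with hq | rfl
  · rw [prefixOnes_wWord_left hq (by omega)]
    omega
  · simpa [Nat.sub_eq_zero_of_le (show s ≤ k + 1 by omega)] using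
      prefixOnes_wWord_right (Q := 0) hk (show s ≤ 2 * (k + 1) by omega)

lemma squareVector_wWord {k i j e : ℕ} (hi : i ≤ k) (hj : j < k) (he : e ≤ k) (hje : j ≤ 2 * e)
    (hek : 2 * e ≤ k + 1 + j) :
    SquareVector (wWord k) ((i + j) * k + e) (i * k + j * (k + 1)) := by
  obtain ⟨b, hb⟩ : ∃ b, i + b = k := ⟨k - i, by omega⟩
  obtain ⟨c, hc⟩ : ∃ c, j + c + 1 = k := ⟨k - j - 1, by omega⟩
  obtain ⟨d, hd⟩ : ∃ d, j + d = 2 * e := ⟨2 * e - j, by omega⟩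
  have hbz : (i : ℤ) + b = k := by exact_mod_cast hb
  have hcz : (j : ℤ) + c + 1 = k := by exact_mod_cast hc
  have hdz : (j : ℤ) + d = 2 * e := by exact_mod_cast hd
  set p := (2 * b + c) * (2 * k) + (k + (c + 1)) with hp
  set L := 2 * (i + j) * k + j + e with hL
  have hmid : p + L = (2 * k + b) * (2 * k) + e := by
    rw [hp, hL]; zify; linear_combination (2 * (k : ℤ)) * hbz + (2 * (k : ℤ) + 1) * hcz
  have hend : p + L + L = 3 * k * (2 * k) + (j * (2 * (k + 1)) + d) := by
    rw [hp, hL]; zify; linear_combination (4 * (k : ℤ)) * hbz + (2 * (k : ℤ) + 1) * hcz - hdz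
  have hones_start : prefixOnes (wWord k) p = (2 * b + c) * k + (c + 1) := by
    rw [prefixOnes_wWord_left (by omega) (by omega)]
    omega
  have hones_mid : prefixOnes (wWord k) (p + L) = (2 * k + b) * k := by
    rw [hmid, prefixOnes_wWord_zeroRun (by omega) (by omega) he]
  have hones_end : prefixOnes (wWord k) (p + L + L) = 3 * k * k + j * (k + 1) := by
    rw [hend, prefixOnes_wWord_right hj (by omega)]
    omega
  refine squareVector_of_prefixOnes (p := p) (L := L) ?_ ?_ ?_ ?_
  · have : j * (2 * (k + 1)) + d ≤ k * (2 * (k + 1)) := by nlinarith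
    rw [hend, length_wWord]
    omega
  · rw [hones_mid, hones_start]
    zify; linear_combination (-(k : ℤ)) * hbz - ((k : ℤ) + 1) * hcz
  · rw [hones_end, hones_mid]
    zify; linear_combination (-(k : ℤ)) * hbz
  · rw [hL]; ring

/-- Let `k ≥ 1` and `ℓ = ik + j(k+1)` with `0 ≤ i ≤ k`, `0 ≤ j ≤ k−1`.  Then the number of
nonnegative integers `r` such that `(r, ℓ)` is a square vector of `w_k` is at least `(k+1)/2`. -/
theorem squareVectors_of_balanced (k i j : ℕ) (hk : 1 ≤ k) (hi : i ≤ k) (hj : j ≤ k - 1) :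
    ((k : ℝ) + 1) / 2 ≤
      ({r : ℕ | SquareVector (wWord k) r (i * k + j * (k + 1))}.ncard : ℝ) := by
  set S := {r : ℕ | SquareVector (wWord k) r (i * k + j * (k + 1))}
  set m := (i + j) * k + (j + 1) / 2
  have hsub : Set.Icc m (m + k / 2) ⊆ S := by
    rintro r ⟨hmr, hrm⟩
    obtain ⟨e, rfl⟩ : ∃ e, r = (i + j) * k + e := ⟨r - (i + j) * k, by omega⟩
    exact squareVector_wWord hi (by omega) (by omega) (by omega) (by omega)
  have hcard : k / 2 + 1 ≤ S.ncard := by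
    have := Set.ncard_le_ncard hsub (finite_setOf_squareVector _ _)
    rw [Set.ncard_Icc_nat] at this
    omega
  rw [div_le_iff₀ two_pos]
  exact_mod_cast (by omega : k + 1 ≤ S.ncard * 2)
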